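/- arXiv:1601.00955 — 3 statements merged into one kernel-verified Lean document; each statement's English description precedes it below -/
import Mathlib

section
/- For a rooted tree T with leaf set L, the set of valid pruned trees of T is in bijection with the set of 0-1 assignments z : nodes(T) → {0,1} satisfying: for every leaf h ∈ L, z_h + Σ_{u ∈ p(h)} z_u = 1, where p(h) is the set of strict ancestors of h. Specifically, a node h is a leaf of the pruned tree iff z_h = 1. -/
set_option linter.unusedSectionVars false


open scoped Classical

/-- A rooted tree on a finite node set `V`: a parent function fixing the root,
with every node reaching the root by iterating `parent`. -/
structure FinRootedTree (V : Type*) where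
  root : V
  parent : V → V
  parent_root : parent root = root
  reaches_root : ∀ v, ∃ n, parent^[n] v = root

namespace FinRootedTree

variable {V : Type*} [Fintype V] [DecidableEq V] (T : FinRootedTree V)

/-- `p(v)`: the set of strict ancestors (predecessors) of `v`. -/
noncomputable def anc (v : V) : Finset V :=
  Finset.univ.filter fun u => u ≠ v ∧ ∃ n, 0 < n ∧ T.parent^[n] v = u

/-- The children of a node. -/
noncomputable def children (v : V) : Finset V :=
  Finset.univ.filter fun c => T.parent c = v ∧ c ≠ v

/-- A leaf is a node with no children. -/
def IsLeaf (v : V) : Prop := T.children v = ∅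

/-- A valid pruned tree: a subtree containing the root in which every
included non-root node has all its siblings included. -/
def ValidPruned (P : Finset V) : Prop :=
  T.root ∈ P ∧
  (∀ v ∈ P, v ≠ T.root → T.parent v ∈ P) ∧
  (∀ v ∈ P, v ≠ T.root → ∀ s, s ≠ T.parent s → T.parent s = T.parent v → s ∈ P)

/-- `h` is a leaf of the pruned tree `P`. -/
def PrunedLeaf (P : Finset V) (h : V) : Prop :=
  h ∈ P ∧ ∀ c ∈ T.children h, c ∉ P

/-- The 0-1 constraints `z_h + ∑_{u ∈ p(h)} z_u = 1` for all leaves `h` of `T`. -/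
def ZConstr (z : V → ℤ) : Prop :=
  (∀ v, z v = 0 ∨ z v = 1) ∧
  ∀ h, T.IsLeaf h → z h + ∑ u ∈ T.anc h, z u = 1


section AuxLemmas
variable {T}


lemma mem_anc {u v : V} : u ∈ T.anc v ↔ u ≠ v ∧ ∃ n, 0 < n ∧ T.parent^[n] v = u := by
  simp [anc]

lemma mem_children {c v : V} : c ∈ T.children v ↔ T.parent c = v ∧ c ≠ v := by
  simp [children]

lemma iterate_root (n : ℕ) : T.parent^[n] T.root = T.root :=
  Function.iterate_fixed T.parent_root n

lemma eq_root_of_cycle {v : V} {N : ℕ} (hN : 0 < N) (h : T.parent^[N] v = v) :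
    v = T.root := by
  obtain ⟨n, hn⟩ := T.reaches_root v
  have hkey : ∀ k, T.parent^[k * N] v = v := by
    intro k
    induction k with
    | zero => simp
    | succ k ih =>
      rw [Nat.succ_mul, Function.iterate_add_apply, h]
      exact ih
  have h1 : n ≤ n * N := Nat.le_mul_of_pos_right n hN
  have h2 : T.parent^[(n * N - n) + n] v = v := by
    rw [Nat.sub_add_cancel h1]; exact hkey n
  rw [Function.iterate_add_apply, hn, iterate_root] at h2
  exact h2.symm

lemma parent_eq_self_iff {v : V} : T.parent v = v ↔ v = T.root := by
  constructor
  · intro h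
    exact eq_root_of_cycle one_pos (by simpa using h)
  · rintro rfl; exact T.parent_root

lemma anc_root : T.anc T.root = ∅ := by
  ext u
  simp only [mem_anc, Finset.notMem_empty, iff_false, not_and]
  rintro hne ⟨n, hn, h⟩
  rw [iterate_root] at h
  exact hne h.symm

lemma notMem_anc_self (v : V) : v ∉ T.anc v := fun h => (mem_anc.1 h).1 rfl

lemma child_ne_root {c v : V} (h : T.parent c = v) (hne : c ≠ v) : c ≠ T.root := by
  rintro rfl
  rw [T.parent_root] at h
  exact hne h

lemma anc_insert {v : V} (hv : v ≠ T.root) :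
    T.anc v = insert (T.parent v) (T.anc (T.parent v)) := by
  have hpv : T.parent v ≠ v := fun h => hv (parent_eq_self_iff.1 h)
  ext u
  simp only [Finset.mem_insert, mem_anc]
  constructor
  · rintro ⟨hne, n, hn, hit⟩
    by_cases hupv : u = T.parent v
    · exact Or.inl hupv
    · right
      obtain ⟨m, rfl⟩ : ∃ m, n = m + 1 := ⟨n - 1, (Nat.succ_pred_eq_of_pos hn).symm⟩
      rw [Function.iterate_succ_apply] at hit
      refine ⟨hupv, m, ?_, hit⟩
      rcases Nat.eq_zero_or_pos m with rfl | hm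
      · simp only [Function.iterate_zero, id_eq] at hit
        exact absurd hit.symm hupv
      · exact hm
  · rintro (rfl | ⟨hne, m, hm, hit⟩)
    · exact ⟨hpv, 1, one_pos, rfl⟩
    · refine ⟨?_, m + 1, Nat.succ_pos m, by rw [Function.iterate_succ_apply]; exact hit⟩
      rintro rfl
      exact hv (eq_root_of_cycle (Nat.succ_pos m)
        (by rw [Function.iterate_succ_apply]; exact hit))

noncomputable def depth (v : V) : ℕ := Nat.find (T.reaches_root v)

lemma iterate_depth (v : V) : T.parent^[T.depth v] v = T.root :=
  Nat.find_spec (T.reaches_root v)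

lemma depth_eq_zero {v : V} (h : T.depth v = 0) : v = T.root := by
  have h2 := iterate_depth (T := T) v
  rw [h] at h2
  simpa using h2

lemma depth_parent_lt {v : V} (hv : v ≠ T.root) : T.depth (T.parent v) < T.depth v := by
  have hpos : 0 < T.depth v := Nat.pos_of_ne_zero fun h => hv (depth_eq_zero h)
  have h3 : T.parent^[T.depth v - 1] (T.parent v) = T.root := by
    have h5 := iterate_depth (T := T) v
    rw [show T.depth v = (T.depth v - 1) + 1 by omega, Function.iterate_succ_apply] at h5
    exact h5
  have h4 : T.depth (T.parent v) ≤ T.depth v - 1 := Nat.find_min' _ h3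
  omega

lemma anc_trans {u v w : V} (h1 : u ∈ T.anc v) (h2 : v ∈ T.anc w) : u ∈ T.anc w := by
  obtain ⟨hu, m, hm, hmu⟩ := mem_anc.1 h1
  obtain ⟨hv, n, hn, hnv⟩ := mem_anc.1 h2
  refine mem_anc.2 ⟨?_, m + n, by omega, by rw [Function.iterate_add_apply, hnv]; exact hmu⟩
  rintro rfl
  have hcyc : T.parent^[m + n] u = u := by rw [Function.iterate_add_apply, hnv]; exact hmu
  have hroot := eq_root_of_cycle (by omega) hcyc
  subst hroot
  rw [anc_root] at h2
  simp at h2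

end AuxLemmas

end FinRootedTree

set_option linter.unusedSectionVars false

namespace FinRootedTree

variable {V : Type*} [Fintype V] [DecidableEq V] {T : FinRootedTree V}

lemma anc_not_prunedLeaf {P : Finset V} (hP : T.ValidPruned P) :
    ∀ v ∈ P, ∀ u ∈ T.anc v, ¬ T.PrunedLeaf P u := by
  suffices H : ∀ n, ∀ v, T.depth v ≤ n → v ∈ P → ∀ u ∈ T.anc v, ¬ T.PrunedLeaf P u from
    fun v hv => H (T.depth v) v le_rfl hv
  intro n
  induction n with
  | zero =>
    intro v hd _ u hu
    have hroot : v = T.root := depth_eq_zero (Nat.le_zero.1 hd)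
    subst hroot
    rw [anc_root] at hu
    simp at hu
  | succ n ih =>
    intro v hd hvP u hu
    by_cases hroot : v = T.root
    · subst hroot; rw [anc_root] at hu; simp at hu
    · rw [anc_insert hroot, Finset.mem_insert] at hu
      have hpP : T.parent v ∈ P := hP.2.1 v hvP hroot
      rcases hu with rfl | hu
      · rintro ⟨_, hc⟩
        exact hc v (mem_children.2 ⟨rfl, fun h => hroot (parent_eq_self_iff.1 h.symm)⟩) hvP
      · exact ih (T.parent v) (by have := depth_parent_lt (T := T) hroot; omega) hpP u hu

lemma mem_of_no_anc_prunedLeaf {P : Finset V} (hP : T.ValidPruned P) :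
    ∀ v, (∀ u ∈ T.anc v, ¬ T.PrunedLeaf P u) → v ∈ P := by
  suffices H : ∀ n, ∀ v, T.depth v ≤ n → (∀ u ∈ T.anc v, ¬ T.PrunedLeaf P u) → v ∈ P from
    fun v h => H (T.depth v) v le_rfl h
  intro n
  induction n with
  | zero =>
    intro v hd _
    rw [depth_eq_zero (Nat.le_zero.1 hd)]
    exact hP.1
  | succ n ih =>
    intro v hd H
    by_cases hroot : v = T.root
    · rw [hroot]; exact hP.1
    · have hanc : T.anc v = insert (T.parent v) (T.anc (T.parent v)) := anc_insert hroot
      have hpar : ∀ u ∈ T.anc (T.parent v), ¬ T.PrunedLeaf P u := fun u hu =>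
        H u (by rw [hanc]; exact Finset.mem_insert_of_mem hu)
      have hpP : T.parent v ∈ P :=
        ih (T.parent v) (by have := depth_parent_lt (T := T) hroot; omega) hpar
      have hpnl : ¬ T.PrunedLeaf P (T.parent v) :=
        H (T.parent v) (by rw [hanc]; exact Finset.mem_insert_self _ _)
      have hex : ∃ c ∈ T.children (T.parent v), c ∈ P := by
        by_contra hcon
        push_neg at hcon
        exact hpnl ⟨hpP, hcon⟩
      obtain ⟨c, hc, hcP⟩ := hex
      rw [mem_children] at hc
      exact hP.2.2 c hcP (child_ne_root hc.1 hc.2) v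
        (fun h => hroot (parent_eq_self_iff.1 h.symm)) hc.1.symm

lemma existsUnique_prunedLeaf {P : Finset V} (hP : T.ValidPruned P) :
    ∀ v, (v ∉ P ∨ T.PrunedLeaf P v) →
      ∃! u, u ∈ insert v (T.anc v) ∧ T.PrunedLeaf P u := by
  suffices H : ∀ n, ∀ v, T.depth v ≤ n → (v ∉ P ∨ T.PrunedLeaf P v) →
      ∃! u, u ∈ insert v (T.anc v) ∧ T.PrunedLeaf P u from
    fun v h => H (T.depth v) v le_rfl h
  intro n
  induction n with
  | zero =>
    intro v hd hv
    have hroot : v = T.root := depth_eq_zero (Nat.le_zero.1 hd)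
    subst hroot
    rcases hv with hv | hv
    · exact absurd hP.1 hv
    · refine ⟨T.root, ⟨Finset.mem_insert_self _ _, hv⟩, ?_⟩
      rintro u ⟨hu, hup⟩
      rw [Finset.mem_insert, anc_root] at hu
      simpa using hu
  | succ n ih =>
    intro v hd hv
    by_cases hroot : v = T.root
    · subst hroot
      rcases hv with hv | hv
      · exact absurd hP.1 hv
      · refine ⟨T.root, ⟨Finset.mem_insert_self _ _, hv⟩, ?_⟩
        rintro u ⟨hu, hup⟩
        rw [Finset.mem_insert, anc_root] at hu
        simpa using hu
    · rcases hv with hv | hv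
      · have hvnp : ¬ T.PrunedLeaf P v := fun h => hv h.1
        have hpar : T.parent v ∉ P ∨ T.PrunedLeaf P (T.parent v) := by
          by_cases hpP : T.parent v ∈ P
          · right
            refine ⟨hpP, ?_⟩
            intro c hc hcP
            rw [mem_children] at hc
            exact hv (hP.2.2 c hcP (child_ne_root hc.1 hc.2) v
              (fun h => hroot (parent_eq_self_iff.1 h.symm)) hc.1.symm)
          · exact Or.inl hpP
        obtain ⟨u, ⟨hu1, hu2⟩, huniq⟩ :=
          ih (T.parent v) (by have := depth_parent_lt (T := T) hroot; omega) hpar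
        have hset : insert v (T.anc v) = insert v (insert (T.parent v) (T.anc (T.parent v))) := by
          rw [anc_insert hroot]
        refine ⟨u, ⟨?_, hu2⟩, ?_⟩
        · rw [hset]; exact Finset.mem_insert_of_mem hu1
        · rintro w ⟨hw1, hw2⟩
          rw [hset, Finset.mem_insert] at hw1
          rcases hw1 with rfl | hw1
          · exact absurd hw2 hvnp
          · exact huniq w ⟨hw1, hw2⟩
      · refine ⟨v, ⟨Finset.mem_insert_self _ _, hv⟩, ?_⟩
        rintro w ⟨hw1, hw2⟩
        rw [Finset.mem_insert] at hw1
        rcases hw1 with rfl | hw1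
        · rfl
        · exact absurd hw2 (anc_not_prunedLeaf hP v hv.1 w hw1)

noncomputable def desc (T : FinRootedTree V) (v : V) : Finset V :=
  Finset.univ.filter fun w => w = v ∨ v ∈ T.anc w

lemma mem_desc_self (v : V) : v ∈ T.desc v := by simp [desc]

lemma exists_leaf_desc (v : V) : ∃ h, T.IsLeaf h ∧ (h = v ∨ v ∈ T.anc h) := by
  suffices H : ∀ n, ∀ v : V, (T.desc v).card ≤ n → ∃ h, T.IsLeaf h ∧ h ∈ T.desc v by
    obtain ⟨h, h1, h2⟩ := H (T.desc v).card v le_rfl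
    simp only [desc, Finset.mem_filter, Finset.mem_univ, true_and] at h2
    exact ⟨h, h1, h2⟩
  intro n
  induction n with
  | zero =>
    intro v hd
    have := Finset.card_pos.2 ⟨v, mem_desc_self (T := T) v⟩
    omega
  | succ n ih =>
    intro v hd
    by_cases hleaf : T.IsLeaf v
    · exact ⟨v, hleaf, mem_desc_self (T := T) v⟩
    · obtain ⟨c, hc⟩ := Finset.nonempty_iff_ne_empty.2 hleaf
      rw [mem_children] at hc
      have hvc : v ∈ T.anc c := mem_anc.2 ⟨fun h => hc.2 h.symm, 1, one_pos, hc.1⟩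
      have hsub : T.desc c ⊆ T.desc v := by
        intro w hw
        simp only [desc, Finset.mem_filter, Finset.mem_univ, true_and] at hw ⊢
        rcases hw with rfl | hw
        · exact Or.inr hvc
        · exact Or.inr (anc_trans hvc hw)
      have hvnot : v ∉ T.desc c := by
        simp only [desc, Finset.mem_filter, Finset.mem_univ, true_and, not_or]
        constructor
        · exact fun h => hc.2 h.symm
        · intro h
          exact notMem_anc_self c (anc_trans h hvc)
      have hlt : (T.desc c).card < (T.desc v).card :=
        Finset.card_lt_card ⟨hsub, fun hsup => hvnot (hsup (mem_desc_self (T := T) v))⟩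
      obtain ⟨h, h1, h2⟩ := ih c (by omega)
      exact ⟨h, h1, hsub h2⟩

end FinRootedTree

namespace FinRootedTree

section Part3
variable {V : Type*} [Fintype V] [DecidableEq V] {T : FinRootedTree V}

lemma zConstr_zOf {P : Finset V} (hP : T.ValidPruned P) :
    T.ZConstr (fun v => if T.PrunedLeaf P v then (1 : ℤ) else 0) := by
  constructor
  · intro v
    by_cases h : T.PrunedLeaf P v <;> simp [h]
  · intro h hleaf
    have hv : h ∉ P ∨ T.PrunedLeaf P h := by
      by_cases hmem : h ∈ P
      · refine Or.inr ⟨hmem, ?_⟩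
        intro c hc
        rw [IsLeaf] at hleaf
        rw [hleaf] at hc
        simp at hc
      · exact Or.inl hmem
    obtain ⟨u₀, ⟨hu₀m, hu₀p⟩, huniq⟩ := existsUnique_prunedLeaf hP h hv
    have hsum : ∑ u ∈ insert h (T.anc h),
        (if T.PrunedLeaf P u then (1 : ℤ) else 0) = 1 := by
      rw [Finset.sum_eq_single_of_mem u₀ hu₀m]
      · rw [if_pos hu₀p]
      · intro b hb hbne
        rw [if_neg]
        exact fun hbp => hbne (huniq b ⟨hb, hbp⟩)
    rw [Finset.sum_insert (notMem_anc_self (T := T) h)] at hsum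
    exact hsum

lemma validPruned_pOf (z : V → ℤ) :
    T.ValidPruned (Finset.univ.filter fun v => ∀ u ∈ T.anc v, z u = 0) := by
  refine ⟨?_, ?_, ?_⟩
  · simp only [Finset.mem_filter, Finset.mem_univ, true_and]
    intro u hu
    rw [anc_root] at hu
    simp at hu
  · intro v hv hvr
    simp only [Finset.mem_filter, Finset.mem_univ, true_and] at hv ⊢
    intro u hu
    exact hv u (by rw [anc_insert hvr]; exact Finset.mem_insert_of_mem hu)
  · intro v hv hvr s hs hps
    simp only [Finset.mem_filter, Finset.mem_univ, true_and] at hv ⊢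
    have hsr : s ≠ T.root := fun h => hs (by rw [h, T.parent_root])
    have heq : T.anc s = T.anc v := by
      rw [anc_insert hsr, anc_insert hvr, hps]
    rw [heq]
    exact hv

lemma pOf_zOf {P : Finset V} (hP : T.ValidPruned P) :
    (Finset.univ.filter fun v => ∀ u ∈ T.anc v,
        (if T.PrunedLeaf P u then (1 : ℤ) else 0) = 0) = P := by
  ext v
  simp only [Finset.mem_filter, Finset.mem_univ, true_and]
  have hiff : (∀ u ∈ T.anc v, (if T.PrunedLeaf P u then (1 : ℤ) else 0) = 0) ↔
      (∀ u ∈ T.anc v, ¬ T.PrunedLeaf P u) := by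
    constructor
    · intro H u hu hp
      have h2 := H u hu
      rw [if_pos hp] at h2
      norm_num at h2
    · intro H u hu
      rw [if_neg (H u hu)]
  rw [hiff]
  exact ⟨fun H => mem_of_no_anc_prunedLeaf hP v H, fun hv => anc_not_prunedLeaf hP v hv⟩

lemma zero_of_ne {z : V → ℤ} (hz : T.ZConstr z) {h u v : V} (hleaf : T.IsLeaf h)
    (hv : v ∈ insert h (T.anc h)) (hu : u ∈ insert h (T.anc h)) (hzv : z v = 1)
    (hne : u ≠ v) : z u = 0 := by
  have h01 := hz.1
  have hsum : ∑ w ∈ insert h (T.anc h), z w = 1 := by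
    rw [Finset.sum_insert (notMem_anc_self (T := T) h)]
    exact hz.2 h hleaf
  have hsub : ({u, v} : Finset V) ⊆ insert h (T.anc h) := by
    intro x hx
    rw [Finset.mem_insert, Finset.mem_singleton] at hx
    rcases hx with rfl | rfl <;> assumption
  have hle : z u + z v ≤ 1 := by
    have h2 := Finset.sum_le_sum_of_subset_of_nonneg (f := z) hsub
      (fun w _ _ => by rcases h01 w with h' | h' <;> omega)
    rwa [Finset.sum_pair hne, hsum] at h2
  rcases h01 u with h' | h'
  · exact h'
  · omega

lemma prunedLeaf_pOf_iff {z : V → ℤ} (hz : T.ZConstr z) (v : V) :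
    T.PrunedLeaf (Finset.univ.filter fun w => ∀ u ∈ T.anc w, z u = 0) v ↔ z v = 1 := by
  constructor
  · rintro ⟨hvP, hch⟩
    simp only [Finset.mem_filter, Finset.mem_univ, true_and] at hvP
    by_cases hleaf : T.IsLeaf v
    · have h2 := hz.2 v hleaf
      rw [Finset.sum_eq_zero hvP] at h2
      omega
    · obtain ⟨c, hc⟩ := Finset.nonempty_iff_ne_empty.2 hleaf
      have hcnot := hch c hc
      simp only [Finset.mem_filter, Finset.mem_univ, true_and, not_forall] at hcnot
      obtain ⟨u, hu, hzu⟩ := hcnot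
      rw [mem_children] at hc
      rw [anc_insert (child_ne_root hc.1 hc.2), hc.1, Finset.mem_insert] at hu
      rcases hu with rfl | hu
      · rcases hz.1 u with h' | h'
        · exact absurd h' hzu
        · exact h'
      · exact absurd (hvP u hu) hzu
  · intro hzv
    obtain ⟨h, hleaf, hdesc⟩ := exists_leaf_desc (T := T) v
    have hvmem : v ∈ insert h (T.anc h) := by
      rcases hdesc with rfl | hd
      · exact Finset.mem_insert_self _ _
      · exact Finset.mem_insert_of_mem hd
    constructor
    · simp only [Finset.mem_filter, Finset.mem_univ, true_and]
      intro u hu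
      have huh : u ∈ insert h (T.anc h) := by
        rcases hdesc with rfl | hd
        · exact Finset.mem_insert_of_mem hu
        · exact Finset.mem_insert_of_mem (anc_trans hu hd)
      exact zero_of_ne hz hleaf hvmem huh hzv (mem_anc.1 hu).1
    · intro c hc hcP
      simp only [Finset.mem_filter, Finset.mem_univ, true_and] at hcP
      rw [mem_children] at hc
      have hvc : v ∈ T.anc c := by
        rw [anc_insert (child_ne_root hc.1 hc.2), hc.1]
        exact Finset.mem_insert_self _ _
      have := hcP v hvc
      omega

lemma zOf_pOf {z : V → ℤ} (hz : T.ZConstr z) :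
    (fun v => if T.PrunedLeaf (Finset.univ.filter fun w => ∀ u ∈ T.anc w, z u = 0) v
      then (1 : ℤ) else 0) = z := by
  funext v
  by_cases hp : T.PrunedLeaf (Finset.univ.filter fun w => ∀ u ∈ T.anc w, z u = 0) v
  · rw [if_pos hp]
    exact ((prunedLeaf_pOf_iff hz v).1 hp).symm
  · rw [if_neg hp]
    rcases hz.1 v with h' | h'
    · exact h'.symm
    · exact absurd ((prunedLeaf_pOf_iff hz v).2 h') hp

end Part3

end FinRootedTree


/-- The set of valid pruned trees of `T` is in bijection with the
0-1 assignments `z` satisfying `z_h + ∑_{u ∈ p(h)} z_u = 1` for every leaf `h`,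
where a node `h` is a leaf of the pruned tree iff `z h = 1`. -/
theorem valid_prunings_equiv_zConstr {V : Type*} [Fintype V] [DecidableEq V]
    (T : FinRootedTree V) :
    ∃ e : {P : Finset V // T.ValidPruned P} ≃ {z : V → ℤ // T.ZConstr z},
      ∀ (P : {P : Finset V // T.ValidPruned P}) (h : V),
        (e P).1 h = 1 ↔ T.PrunedLeaf P.1 h := by
  refine ⟨{
    toFun := fun P => ⟨fun v => if T.PrunedLeaf P.1 v then 1 else 0,
      FinRootedTree.zConstr_zOf P.2⟩
    invFun := fun z => ⟨Finset.univ.filter fun v => ∀ u ∈ T.anc v, z.1 u = 0,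
      FinRootedTree.validPruned_pOf z.1⟩
    left_inv := fun P => Subtype.ext (FinRootedTree.pOf_zOf P.2)
    right_inv := fun z => Subtype.ext (FinRootedTree.zOf_pOf z.2) }, ?_⟩
  intro P h
  simp only [Equiv.coe_fn_mk]
  by_cases hp : T.PrunedLeaf P.1 h <;> simp [hp]
end

section
/- If A is a totally unimodular matrix and b is an integral vector, then every extreme point (basic feasible solution) of the polyhedron {x : Ax = b, x ≥ 0} is integral. Consequently, a linear program min c'x over this polyhedron with a finite optimum has an integral optimal solution. -/
/-!
At an extreme point `x` of `{x | A x = b, x ≥ 0}` the columns of `A` on the support of `x` are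
linearly independent, since otherwise `x` could be moved both ways along a kernel direction
supported in its support. Those columns contain an invertible square submatrix `B` of `A`, and the
nonzero part of `x` solves `B y = b'` for a subvector `b'` of `b`. Total unimodularity gives
`det B = ±1`, so `B⁻¹ = ± adj B` is an integer matrix and `x` is integral.

For the linear program, a feasible point whose support columns are dependent can be pushed along a
kernel direction that does not increase the cost until one more coordinate vanishes: a kernel
direction without negative coordinates would have nonnegative cost, as the cost is bounded below.
So every feasible point is dominated by a basic one. Basic solutions are determined by their
supports, hence finitely many, and the cheapest of them is an integral optimum.
-/

open Matrix

theorem Ring.inverse_signType_cast {R : Type*} [Ring R] (s : SignType) :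
    Ring.inverse (s : R) = s := by
  rcases s with _ | _ | _
  · simp
  · simpa using Ring.inverse_unit (-1 : Rˣ)
  · simp

theorem exists_nonneg_add_mul_eq_zero {n K : Type*} [Fintype n] [Field K] [LinearOrder K]
    [IsStrictOrderedRing K] {x d : n → K} (hx : ∀ j, 0 ≤ x j) (hd : ∃ j, d j < 0) :
    ∃ t, 0 ≤ t ∧ (∀ j, 0 ≤ x j + t * d j) ∧ ∃ j, d j < 0 ∧ x j + t * d j = 0 := by
  classical
  obtain ⟨j₀, hj₀, hmin⟩ := (Finset.univ.filter fun j => d j < 0).exists_min_image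
    (fun j => x j / -d j) (by simpa [Finset.filter_nonempty_iff] using hd)
  rw [Finset.mem_filter] at hj₀
  refine ⟨x j₀ / -d j₀, div_nonneg (hx j₀) (by linarith), fun j => ?_, j₀, hj₀.2, ?_⟩
  · rcases le_or_gt 0 (d j) with hdj | hdj
    · exact add_nonneg (hx j) (mul_nonneg (div_nonneg (hx j₀) (by linarith)) hdj)
    · have := hmin j (by simpa using hdj)
      rw [le_div_iff₀ (neg_pos.mpr hdj)] at this
      linarith
  · field_simp [hj₀.2.ne]
    ring

namespace Matrix

section CommRing

variable {m n R : Type*} [CommRing R]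

theorem IsTotallyUnimodular.exists_map_intCast_eq {A : Matrix m n R}
    (hA : A.IsTotallyUnimodular) : ∃ A₀ : Matrix m n ℤ, A₀.map (↑) = A := by
  choose s hs using hA.apply
  exact ⟨of fun i j => (s i j : ℤ), ext fun i j => by simp [SignType.intCast_cast, hs]⟩

variable [Fintype n]

theorem submatrix_val_mulVec_of_support_subset (A : Matrix m n R) {s : Set n} [Fintype s]
    {x : n → R} (hx : Function.support x ⊆ s) :
    A.submatrix id (↑) *ᵥ (fun j : s => x j) = A *ᵥ x := by
  classical
  ext i
  simp only [mulVec, dotProduct, submatrix_apply, id]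
  rw [Finset.sum_set_coe (f := fun j => A i j * x j)]
  refine Finset.sum_subset (Finset.subset_univ _) fun j _ hj => ?_
  rw [Set.mem_toFinset] at hj
  rw [Function.notMem_support.mp (fun h => hj (hx h)), mul_zero]

theorem linearIndepOn_col_iff {A : Matrix m n R} {s : Set n} :
    LinearIndepOn R A.col s ↔ ∀ d : n → R, Function.support d ⊆ s → A *ᵥ d = 0 → d = 0 := by
  classical
  rw [linearIndepOn_iff]
  refine Finsupp.equivFunOnFinite.forall_congr fun l => ?_
  rw [Finsupp.mem_supported, Finsupp.linearCombination_apply, Finsupp.sum_fintype _ _ (by simp),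
    mulVec_eq_sum, ← Finsupp.fun_support_eq]
  simp only [op_smul_eq_smul, ← Finsupp.coe_eq_zero]
  rfl

theorem eq_of_linearIndepOn_support {A : Matrix m n R} {x y : n → R}
    (hx : LinearIndepOn R A.col (Function.support x)) (h : A *ᵥ x = A *ᵥ y)
    (hs : Function.support y ⊆ Function.support x) : x = y := by
  rw [linearIndepOn_col_iff] at hx
  refine sub_eq_zero.mp (hx _ ?_ (by rw [mulVec_sub, h, sub_self]))
  exact (Function.support_sub x y).trans (Set.union_subset subset_rfl hs)

theorem finite_setOf_linearIndepOn_support (A : Matrix m n R) (b : m → R) :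
    {x | A *ᵥ x = b ∧ LinearIndepOn R A.col (Function.support x)}.Finite :=
  Set.Finite.of_finite_image (Set.toFinite _) fun _ hx _ hy hxy =>
    eq_of_linearIndepOn_support hx.2 (hx.1.trans hy.1.symm) hxy.symm.subset

variable [DecidableEq n]

theorem IsTotallyUnimodular.exists_inv_eq_map_intCast {B : Matrix n n R}
    (hB : B.IsTotallyUnimodular) : ∃ C : Matrix n n ℤ, C.map (↑) = B⁻¹ := by
  obtain ⟨s, hs⟩ : B.det ∈ Set.range SignType.cast := by
    simpa using (isTotallyUnimodular_iff_fintype B).mp hB n id id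
  obtain ⟨B₀, rfl⟩ := hB.exists_map_intCast_eq
  refine ⟨(s : ℤ) • B₀.adjugate, ?_⟩
  have hadj := (Int.castRingHom R).map_adjugate B₀
  simp only [RingHom.mapMatrix_apply, Int.coe_castRingHom] at hadj
  rw [inv_def, ← hs, Ring.inverse_signType_cast, ← hadj]
  ext i j
  simp only [map_apply, smul_apply, smul_eq_mul, Int.cast_mul, SignType.intCast_cast]

theorem IsTotallyUnimodular.intCast_of_mulVec {B : Matrix n n R} (hB : B.IsTotallyUnimodular)
    (hdet : IsUnit B.det) {y : n → R} (hy : ∀ i, ∃ k : ℤ, (B *ᵥ y) i = k) :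
    ∀ j, ∃ k : ℤ, y j = k := by
  choose β hβ using hy
  obtain ⟨C, hC⟩ := hB.exists_inv_eq_map_intCast
  have hBy : y = B⁻¹ *ᵥ (B *ᵥ y) := by
    rw [mulVec_mulVec, nonsing_inv_mul _ hdet, one_mulVec]
  intro j
  refine ⟨(C *ᵥ β) j, ?_⟩
  rw [hBy, funext hβ, ← hC]
  exact ((Int.castRingHom R).map_mulVec C β j).symm

end CommRing

section Field

variable {m n K : Type*} [Fintype m] [Fintype n] [Field K]

theorem exists_isUnit_det_submatrix_of_linearIndependent_col [DecidableEq n] {A : Matrix m n K}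
    (h : LinearIndependent K A.col) : ∃ g : n → m, IsUnit (A.submatrix g id).det := by
  have hspan : Submodule.span K (Set.range A.row) = ⊤ := by
    apply Submodule.eq_top_of_finrank_eq
    rw [← row_transpose] at h
    rw [← rank_eq_finrank_span_row, ← rank_transpose, h.rank_matrix,
      Module.finrank_fintype_fun_eq_card]
  obtain ⟨κ, a, -, hsp, hli⟩ := exists_linearIndependent' K A.row
  let e := (Pi.basisFun K n).indexEquiv (Module.Basis.mk hli (by rw [hsp, hspan]))
  refine ⟨a ∘ e, ?_⟩
  rw [← isUnit_iff_isUnit_det, ← linearIndependent_rows_iff_isUnit]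
  exact hli.comp e e.injective

theorem IsTotallyUnimodular.intCast_of_linearIndepOn_support {A : Matrix m n K}
    (hA : A.IsTotallyUnimodular) {x : n → K} (hx : LinearIndepOn K A.col (Function.support x))
    (hb : ∀ i, ∃ k : ℤ, (A *ᵥ x) i = k) : ∀ j, ∃ k : ℤ, x j = k := by
  classical
  obtain ⟨g, hg⟩ := exists_isUnit_det_submatrix_of_linearIndependent_col
    (A := A.submatrix id ((↑) : Function.support x → n)) hx
  have hxs : ∀ i, ∃ k : ℤ,
      ((A.submatrix id (↑)).submatrix g id *ᵥ fun j : Function.support x => x j) i = k := by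
    intro i
    change ∃ k : ℤ, (A.submatrix id (↑) *ᵥ fun j : Function.support x => x j) (g i) = k
    rw [submatrix_val_mulVec_of_support_subset A subset_rfl]
    exact hb (g i)
  have := ((hA.submatrix id (↑)).submatrix g id).intCast_of_mulVec hg hxs
  intro j
  by_cases hj : x j = 0
  · exact ⟨0, by simp [hj]⟩
  · exact this ⟨j, hj⟩

end Field

section Polyhedron

variable {m n K : Type*} [Fintype n] [Field K] [LinearOrder K]

def standardPolyhedron (A : Matrix m n K) (b : m → K) : Set (n → K) :=
  {x | A *ᵥ x = b ∧ ∀ j, 0 ≤ x j}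

variable {A : Matrix m n K} {b : m → K}

theorem add_smul_mem_standardPolyhedron {x d : n → K} {t : K} (hx : x ∈ A.standardPolyhedron b)
    (hd : A *ᵥ d = 0) (ht : ∀ j, 0 ≤ x j + t * d j) : x + t • d ∈ A.standardPolyhedron b :=
  ⟨by rw [mulVec_add, mulVec_smul, hd, smul_zero, add_zero, hx.1], ht⟩

variable [IsStrictOrderedRing K]

theorem linearIndepOn_support_of_mem_extremePoints {x : n → K}
    (hx : x ∈ (A.standardPolyhedron b).extremePoints K) :
    LinearIndepOn K A.col (Function.support x) := by
  rw [linearIndepOn_col_iff]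
  intro d hds hAd
  by_contra hd0
  obtain ⟨j, hj⟩ := Function.ne_iff.mp hd0
  -- The ratio test along `-|d|` yields `t > 0` with `t * |d| ≤ x`, so `x ± t • d` are feasible.
  obtain ⟨t, ht0, ht, i, hi, hxi⟩ :=
    exists_nonneg_add_mul_eq_zero hx.1.2 (d := fun j => -|d j|) ⟨j, by simpa using hj⟩
  have htpos : 0 < t := by
    have hxi0 : x i ≠ 0 := hds (by simpa using hi)
    refine lt_of_le_of_ne ht0 ?_
    rintro rfl
    exact hxi0 (by simpa using hxi)
  have hmem : ∀ s : K, |s| ≤ t → x + s • d ∈ A.standardPolyhedron b := by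
    refine fun s hs => add_smul_mem_standardPolyhedron hx.1 hAd fun j => ?_
    have : |s * d j| ≤ t * |d j| := by
      rw [abs_mul]
      exact mul_le_mul_of_nonneg_right hs (abs_nonneg _)
    linarith [neg_abs_le (s * d j), ht j]
  have h := hx.2 (hmem (-t) (by rw [abs_neg, abs_of_pos htpos])) (hmem t (abs_of_pos htpos).le)
    (by simpa [neg_smul, ← sub_eq_add_neg] using mem_openSegment_sub_add (𝕜 := K) x (t • d))
  rw [add_eq_left, smul_eq_zero, neg_eq_zero] at h
  exact h.elim htpos.ne' hd0

theorem dotProduct_nonneg_of_bddBelow {c y d : n → K} (hy : y ∈ A.standardPolyhedron b)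
    (hbdd : BddBelow ((c ⬝ᵥ ·) '' A.standardPolyhedron b)) (hAd : A *ᵥ d = 0)
    (hd : ∀ j, 0 ≤ d j) : 0 ≤ c ⬝ᵥ d := by
  obtain ⟨L, hL⟩ := hbdd
  have hray : ∀ t : K, 0 ≤ t → L ≤ c ⬝ᵥ y + t * (c ⬝ᵥ d) := fun t ht => by
    have := hL ⟨_, add_smul_mem_standardPolyhedron hy hAd
      (fun j => add_nonneg (hy.2 j) (mul_nonneg ht (hd j))), rfl⟩
    simpa only [dotProduct_add, dotProduct_smul, smul_eq_mul] using this
  by_contra! hcd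
  have := hray ((c ⬝ᵥ y - L + 1) / -(c ⬝ᵥ d))
    (div_nonneg (by linarith [hray 0 le_rfl]) (by linarith))
  rw [div_mul_eq_mul_div, mul_div_assoc, div_neg, div_self hcd.ne, mul_neg, mul_one] at this
  linarith

theorem exists_descent_direction {c y : n → K} (hy : y ∈ A.standardPolyhedron b)
    (hbdd : BddBelow ((c ⬝ᵥ ·) '' A.standardPolyhedron b))
    (hind : ¬LinearIndepOn K A.col (Function.support y)) :
    ∃ d, Function.support d ⊆ Function.support y ∧ A *ᵥ d = 0 ∧ c ⬝ᵥ d ≤ 0 ∧ ∃ j, d j < 0 := by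
  rw [linearIndepOn_col_iff] at hind
  push Not at hind
  obtain ⟨d, hds, hAd, hd0⟩ := hind
  have key : ∀ e : n → K, Function.support e ⊆ Function.support y → A *ᵥ e = 0 → e ≠ 0 →
      c ⬝ᵥ e ≤ 0 →
      ∃ d, Function.support d ⊆ Function.support y ∧ A *ᵥ d = 0 ∧ c ⬝ᵥ d ≤ 0 ∧ ∃ j, d j < 0 := by
    intro e hes hAe he0 hce
    by_cases hneg : ∃ j, e j < 0
    · exact ⟨e, hes, hAe, hce, hneg⟩
    push Not at hneg
    have hce0 : c ⬝ᵥ e = 0 := le_antisymm hce (dotProduct_nonneg_of_bddBelow hy hbdd hAe hneg)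
    obtain ⟨j, hj⟩ := Function.ne_iff.mp he0
    refine ⟨-e, by rwa [Function.support_neg], by rw [mulVec_neg, hAe, neg_zero],
      by rw [dotProduct_neg, hce0, neg_zero], j, ?_⟩
    simpa using lt_of_le_of_ne (hneg j) (Ne.symm hj)
  rcases le_total (c ⬝ᵥ d) 0 with hcd | hcd
  · exact key d hds hAd hd0 hcd
  · exact key (-d) (by rwa [Function.support_neg]) (by rw [mulVec_neg, hAd, neg_zero])
      (neg_ne_zero.mpr hd0) (by rwa [dotProduct_neg, neg_nonpos])

theorem exists_support_ssubset_of_not_linearIndepOn {c y : n → K}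
    (hy : y ∈ A.standardPolyhedron b) (hbdd : BddBelow ((c ⬝ᵥ ·) '' A.standardPolyhedron b))
    (hind : ¬LinearIndepOn K A.col (Function.support y)) :
    ∃ y' ∈ A.standardPolyhedron b,
      Function.support y' ⊂ Function.support y ∧ c ⬝ᵥ y' ≤ c ⬝ᵥ y := by
  obtain ⟨d, hds, hAd, hcd, hneg⟩ := exists_descent_direction hy hbdd hind
  obtain ⟨t, ht0, ht, j, hj, hyj⟩ := exists_nonneg_add_mul_eq_zero hy.2 hneg
  refine ⟨y + t • d, add_smul_mem_standardPolyhedron hy hAd ht, ?_, ?_⟩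
  · have hsub : Function.support (y + t • d) ⊆ Function.support y :=
      (Function.support_add _ _).trans
        (Set.union_subset subset_rfl ((Function.support_smul_subset_right _ _).trans hds))
    exact (Set.ssubset_iff_of_subset hsub).mpr ⟨j, hds hj.ne, by simpa using hyj⟩
  · rw [dotProduct_add, dotProduct_smul, smul_eq_mul]
    linarith [mul_nonpos_of_nonneg_of_nonpos ht0 hcd]

theorem exists_linearIndepOn_support_le {c y : n → K} (hy : y ∈ A.standardPolyhedron b)
    (hbdd : BddBelow ((c ⬝ᵥ ·) '' A.standardPolyhedron b)) :
    ∃ x ∈ A.standardPolyhedron b,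
      LinearIndepOn K A.col (Function.support x) ∧ c ⬝ᵥ x ≤ c ⬝ᵥ y := by
  induction hs : Function.support y using WellFoundedLT.induction generalizing y with
  | ind s ih =>
    by_cases hind : LinearIndepOn K A.col (Function.support y)
    · exact ⟨y, hy, hind, le_rfl⟩
    obtain ⟨y', hy', hss, hcy'⟩ := exists_support_ssubset_of_not_linearIndepOn hy hbdd hind
    obtain ⟨x, hx, hxind, hcx⟩ := ih _ (hs ▸ hss) hy' rfl
    exact ⟨x, hx, hxind, hcx.trans hcy'⟩

theorem exists_linearIndepOn_support_forall_le {c : n → K}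
    (hne : (A.standardPolyhedron b).Nonempty)
    (hbdd : BddBelow ((c ⬝ᵥ ·) '' A.standardPolyhedron b)) :
    ∃ x ∈ A.standardPolyhedron b, LinearIndepOn K A.col (Function.support x) ∧
      ∀ y ∈ A.standardPolyhedron b, c ⬝ᵥ x ≤ c ⬝ᵥ y := by
  let S := {x | x ∈ A.standardPolyhedron b ∧ LinearIndepOn K A.col (Function.support x)}
  have hS : S.Finite :=
    (finite_setOf_linearIndepOn_support A b).subset fun x hx => ⟨hx.1.1, hx.2⟩
  obtain ⟨y, hy⟩ := hne
  obtain ⟨x₀, hx₀, hind₀, -⟩ := exists_linearIndepOn_support_le hy hbdd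
  obtain ⟨x, ⟨hx, hind⟩, hmin⟩ := S.exists_min_image (c ⬝ᵥ ·) hS ⟨x₀, hx₀, hind₀⟩
  refine ⟨x, hx, hind, fun y hy => ?_⟩
  obtain ⟨z, hz, hindz, hzy⟩ := exists_linearIndepOn_support_le hy hbdd
  exact (hmin z ⟨hz, hindz⟩).trans hzy

end Polyhedron

end Matrix

/-- If `A` is totally unimodular and `b` is integral, then every
extreme point of the polyhedron `{x : Ax = b, x ≥ 0}` is integral; consequently,
any linear program `min c'x` over this polyhedron that is feasible and bounded
below has an integral optimal solution. -/
theorem tu_polyhedron_integral_extreme_points {m n : ℕ}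
    (A : Matrix (Fin m) (Fin n) ℝ) (hA : A.IsTotallyUnimodular)
    (b : Fin m → ℝ) (hb : ∀ i, ∃ k : ℤ, b i = (k : ℝ)) :
    (∀ x ∈ Set.extremePoints ℝ
        {x : Fin n → ℝ | A.mulVec x = b ∧ ∀ i, 0 ≤ x i},
      ∀ i, ∃ k : ℤ, x i = (k : ℝ)) ∧
    (∀ c : Fin n → ℝ,
      ({x : Fin n → ℝ | A.mulVec x = b ∧ ∀ i, 0 ≤ x i}).Nonempty →
      BddBelow ((fun x => c ⬝ᵥ x) '' {x : Fin n → ℝ | A.mulVec x = b ∧ ∀ i, 0 ≤ x i}) →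
      ∃ x, (A.mulVec x = b ∧ ∀ i, 0 ≤ x i) ∧ (∀ i, ∃ k : ℤ, x i = (k : ℝ)) ∧
        ∀ y, A.mulVec y = b → (∀ i, 0 ≤ y i) → c ⬝ᵥ x ≤ c ⬝ᵥ y) := by
  refine ⟨fun x hx => ?_, fun c hne hbdd => ?_⟩
  · exact hA.intCast_of_linearIndepOn_support
      (linearIndepOn_support_of_mem_extremePoints (A := A) (b := b) hx) (hx.1.1 ▸ hb)
  · obtain ⟨x, hx, hind, hmin⟩ := exists_linearIndepOn_support_forall_le (A := A) hne hbdd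
    exact ⟨x, hx, hA.intCast_of_linearIndepOn_support hind (hx.1 ▸ hb),
      fun y hy₁ hy₂ => hmin y ⟨hy₁, hy₂⟩⟩
end

section
/- Consider the polytope P ⊆ [0,1]^7 in variables (z1,z2,z3,z4,z5,w1,w2) defined by the equalities z1+z3+z4=1, z1+z3+z5=1, z1+z2=1 and inequalities w1 ≥ z4, w1 ≥ z3, w2 ≥ z4, together with 0 ≤ z,w ≤ 1. Then the point (z1,z2,z3,z4,z5,w1,w2) = (0,1,1/2,1/2,1/2,1/2,1/2) is an extreme point of P, and it is not integral. -/
/-- The polytope of the naive LP relaxation (IP1) for the two-level example tree: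
coordinates `(z₁, z₂, z₃, z₄, z₅, w₁, w₂) = (x 0, …, x 6)`. -/
def naivePruningPolytope : Set (Fin 7 → ℝ) :=
  {x | x 0 + x 2 + x 3 = 1 ∧ x 0 + x 2 + x 4 = 1 ∧ x 0 + x 1 = 1 ∧
       x 3 ≤ x 5 ∧ x 2 ≤ x 5 ∧ x 3 ≤ x 6 ∧
       ∀ i, 0 ≤ x i ∧ x i ≤ 1}

/-!
The point is exposed, hence extreme: the tight inequalities there are `z₁ ≥ 0`, `w₁ ≥ z₃`,
`w₁ ≥ z₄` and `w₂ ≥ z₄`, and minus the sum of their slacks is a linear functional that is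
`≤ 0` on the polytope. It vanishes only where all four are tight, and together with the
equalities `z₁ + z₃ + z₄ = z₁ + z₃ + z₅ = z₁ + z₂ = 1` this pins down the point.
-/

theorem one_half_ne_intCast {K : Type*} [DivisionRing K] [CharZero K] (k : ℤ) :
    (1 / 2 : K) ≠ k := by
  intro h
  have h2k : ((1 : ℤ) : K) = ((2 * k : ℤ) : K) := by
    push_cast
    rw [← h]
    norm_num
  have := Int.cast_injective h2k
  omega

namespace NaivePruning

noncomputable def fractionalVertex : Fin 7 → ℝ := ![0, 1, 1/2, 1/2, 1/2, 1/2, 1/2]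

def slackFunctional : StrongDual ℝ (Fin 7 → ℝ) :=
  let x : Fin 7 → StrongDual ℝ (Fin 7 → ℝ) := ContinuousLinearMap.proj
  (x 2 - x 5) + (x 3 - x 5) + (x 3 - x 6) - x 0

theorem slackFunctional_apply (y : Fin 7 → ℝ) :
    slackFunctional y = (y 2 - y 5) + (y 3 - y 5) + (y 3 - y 6) - y 0 := rfl

theorem fractionalVertex_mem : fractionalVertex ∈ naivePruningPolytope := by
  refine ⟨?_, ?_, ?_, le_rfl, le_rfl, le_rfl, ?_⟩
  · simp [fractionalVertex, ← two_mul]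
  · simp [fractionalVertex, ← two_mul]
  · simp [fractionalVertex]
  · intro i
    fin_cases i <;> norm_num [fractionalVertex]

theorem slackFunctional_nonpos {y : Fin 7 → ℝ} (hy : y ∈ naivePruningPolytope) :
    slackFunctional y ≤ 0 := by
  obtain ⟨-, -, -, h35, h25, h36, hbox⟩ := hy
  rw [slackFunctional_apply]
  linarith [(hbox 0).1]

theorem eq_fractionalVertex_of_slackFunctional_eq_zero {y : Fin 7 → ℝ}
    (hy : y ∈ naivePruningPolytope) (h : slackFunctional y = 0) : y = fractionalVertex := by
  obtain ⟨hsum3, hsum4, hsum1, h35, h25, h36, hbox⟩ := hy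
  rw [slackFunctional_apply] at h
  have hy0 : 0 ≤ y 0 := (hbox 0).1
  have y0 : y 0 = 0 := by linarith
  have y25 : y 2 = y 5 := by linarith
  have y35 : y 3 = y 5 := by linarith
  have y36 : y 3 = y 6 := by linarith
  funext i
  fin_cases i <;>
    simp only [Fin.zero_eta, Fin.mk_one, Fin.reduceFinMk, Fin.isValue, fractionalVertex,
      Matrix.cons_val_zero, Matrix.cons_val_one, Matrix.cons_val] <;> linarith

theorem fractionalVertex_mem_exposedPoints :
    fractionalVertex ∈ naivePruningPolytope.exposedPoints ℝ := by
  have hzero : slackFunctional fractionalVertex = 0 := by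
    simp [slackFunctional_apply, fractionalVertex]
  refine ⟨fractionalVertex_mem, slackFunctional, fun y hy => ⟨?_, fun hle => ?_⟩⟩
  · exact hzero ▸ slackFunctional_nonpos hy
  · exact eq_fractionalVertex_of_slackFunctional_eq_zero hy
      (le_antisymm (slackFunctional_nonpos hy) (hzero ▸ hle))

end NaivePruning

/-- The point
`(z₁,z₂,z₃,z₄,z₅,w₁,w₂) = (0, 1, 1/2, 1/2, 1/2, 1/2, 1/2)` is an extreme point of
the naive LP-relaxation polytope, and it is not integral. -/
theorem naive_relaxation_has_fractional_extreme_point :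
    (![0, 1, 1/2, 1/2, 1/2, 1/2, 1/2] : Fin 7 → ℝ) ∈
        Set.extremePoints ℝ naivePruningPolytope ∧
    ¬ ∀ i : Fin 7, ∃ k : ℤ,
        (![0, 1, 1/2, 1/2, 1/2, 1/2, 1/2] : Fin 7 → ℝ) i = (k : ℝ) := by
  refine ⟨exposedPoints_subset_extremePoints NaivePruning.fractionalVertex_mem_exposedPoints,
    fun h => ?_⟩
  obtain ⟨k, hk⟩ := h 2
  exact one_half_ne_intCast k hk
end
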